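/- arXiv:2403.07577 — 2 statements merged into one kernel-verified Lean document; each statement's English description precedes it below -/
import Mathlib

section
/- The pair (μ₂*, μ₄*) = ((√15 − 5)/5, 6(9 − √15)/55) is a solution of the fixed point system 0 = −(1+η)μ₂ − (μ₄/4)·1/(1+μ₂)² and 0 = −(1/2 + 3η)μ₄ + (μ₄²/2)·1/(1+μ₂)³, where η = −(μ₄/8)·μ₂/(1+μ₂)³. -/
theorem quartic_fixed_point_solution :
    let μ₂ : ℝ := (Real.sqrt 15 - 5) / 5
    let μ₄ : ℝ := 6 * (9 - Real.sqrt 15) / 55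
    let η : ℝ := -(μ₄/8) * μ₂ / (1 + μ₂)^3
    (0 = -(1 + η) * μ₂ - (μ₄/4) * (1 / (1 + μ₂)^2)) ∧
    (0 = -((1:ℝ)/2 + 3*η) * μ₄ + (μ₄^2/2) * (1 / (1 + μ₂)^3)) := by
  intro μ₂ μ₄ η
  set s := Real.sqrt 15
  have hs : s ^ 2 = 15 := Real.sq_sqrt (by norm_num)
  have hs_ne : s ≠ 0 := by positivity
  have h_one_add : 1 + μ₂ = s / 5 := by ring
  have h_inv_sq : 1 / (1 + μ₂) ^ 2 = 5 / 3 := by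
    rw [h_one_add, div_pow, hs]; norm_num
  have h_inv_cube : 1 / (1 + μ₂) ^ 3 = 5 * s / 9 := by
    rw [h_one_add]
    field_simp
    linear_combination -(s ^ 2 + 15) * hs
  -- Each remaining identity is a polynomial in `s` divisible by `s ^ 2 - 15`;
  -- the coefficients below are the quotients.
  have hη : η = (2 * s - 7) / 22 := by
    rw [show η = -(μ₄/8) * μ₂ * (1 / (1 + μ₂)^3) by ring, h_inv_cube]
    linear_combination (s - 14) / 660 * hs
  rw [hη, h_inv_sq, h_inv_cube]
  constructor
  · linear_combination hs / 55
  · linear_combination (18 - 2 * s) / 605 * hs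
end

section
/- For m > 0 and σ = 1, the exact identity ∫₀^4 (√(p'(4−p'))/(2π))/(m+p') dp' = (1/2)(m + 2 − √(m(m+4))) holds. -/
theorem one_loop_integral_exact (m : ℝ) (hm : 0 < m) :
    (∫ p in (0:ℝ)..4, Real.sqrt (p * (4 - p)) / (2 * Real.pi * (m + p)))
      = (1/2) * (m + 2 - Real.sqrt (m * (m + 4))) := by
  have hπ : (0:ℝ) < Real.pi := Real.pi_pos
  set c := Real.sqrt (m * (m + 4)) with hc
  have hc2 : c ^ 2 = m * (m + 4) := Real.sq_sqrt (by positivity)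
  have hcpos : 0 < c := Real.sqrt_pos.mpr (by positivity)
  set F : ℝ → ℝ := fun p => (Real.sqrt (p * (4 - p)) + (m + 2) * Real.arcsin ((p - 2) / 2)
      + c * Real.arccos (((m + 2) * p - 2 * m) / (2 * (m + p)))) / (2 * Real.pi) with hF
  have key : ∫ p in (0:ℝ)..4, Real.sqrt (p * (4 - p)) / (2 * Real.pi * (m + p)) = F 4 - F 0 := by
    apply intervalIntegral.integral_eq_sub_of_hasDerivAt_of_le (by norm_num)
    · -- continuity of F on Icc 0 4
      apply ContinuousOn.div_const
      refine ContinuousOn.add (ContinuousOn.add ?_ ?_) ?_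
      · exact (Real.continuous_sqrt.comp
          (continuous_id.mul (continuous_const.sub continuous_id))).continuousOn
      · exact (continuous_const.mul (Real.continuous_arcsin.comp
          ((continuous_id.sub continuous_const).div_const 2))).continuousOn
      · refine continuous_const.continuousOn.mul (Real.continuous_arccos.comp_continuousOn ?_)
        refine ContinuousOn.div ?_ ?_ ?_
        · exact ((continuous_const.mul continuous_id).sub continuous_const).continuousOn
        · exact (continuous_const.mul (continuous_const.add continuous_id)).continuousOn
        · intro x hx
          have h0 : 0 ≤ x := hx.1
          positivity
    · intro x hx
      obtain ⟨hx0, hx4⟩ := hx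
      have hprod : 0 < x * (4 - x) := by nlinarith
      set s := Real.sqrt (x * (4 - x)) with hs
      have hs2 : s ^ 2 = x * (4 - x) := Real.sq_sqrt hprod.le
      have hspos : 0 < s := Real.sqrt_pos.mpr hprod
      have hmx : 0 < m + x := by linarith
      -- derivative of sqrt part
      have h1 : HasDerivAt (fun p : ℝ => p * (4 - p)) (4 - 2 * x) x := by
        have h := (hasDerivAt_id x).mul ((hasDerivAt_const x (4:ℝ)).sub (hasDerivAt_id x))
        simp only [id_eq] at h
        exact h.congr_deriv (by simp only [Pi.sub_apply, id_eq]; ring)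
      have hsd : HasDerivAt (fun p : ℝ => Real.sqrt (p * (4 - p))) ((4 - 2 * x) / (2 * s)) x :=
        h1.sqrt hprod.ne'
      -- derivative of arcsin part
      have hu : HasDerivAt (fun p : ℝ => (p - 2) / 2) (1 / 2) x := by
        have h := ((hasDerivAt_id x).sub (hasDerivAt_const x (2:ℝ))).div_const 2
        simp only [Pi.sub_apply, id_eq] at h
        exact h.congr_deriv (by norm_num)
      have hune1 : (x - 2) / 2 ≠ -1 := by intro h; nlinarith [h]
      have hune2 : (x - 2) / 2 ≠ 1 := by intro h; nlinarith [h]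
      have hsq1 : Real.sqrt (1 - ((x - 2) / 2) ^ 2) = s / 2 := by
        have e1 : 1 - ((x - 2) / 2) ^ 2 = (s / 2) ^ 2 := by
          rw [div_pow, div_pow, hs2]; ring
        rw [e1, Real.sqrt_sq (by positivity)]
      have hasd : HasDerivAt (fun p : ℝ => Real.arcsin ((p - 2) / 2))
          ((1 / Real.sqrt (1 - ((x - 2) / 2) ^ 2)) * (1 / 2)) x :=
        HasDerivAt.comp (h₂ := Real.arcsin) x (Real.hasDerivAt_arcsin hune1 hune2) hu
      -- derivative of arccos part
      set g : ℝ → ℝ := fun p => ((m + 2) * p - 2 * m) / (2 * (m + p)) with hg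
      have hgd : HasDerivAt g
          (((m + 2) * (2 * (m + x)) - ((m + 2) * x - 2 * m) * 2) / (2 * (m + x)) ^ 2) x := by
        apply HasDerivAt.div
        · have h := ((hasDerivAt_const x (m + 2)).mul (hasDerivAt_id x)).sub
            (hasDerivAt_const x (2 * m))
          simp only [id_eq] at h
          exact h.congr_deriv (by ring)
        · have h := (hasDerivAt_const x (2:ℝ)).mul ((hasDerivAt_const x m).add (hasDerivAt_id x))
          exact h.congr_deriv (by simp only [Pi.add_apply, id_eq]; ring)
        · positivity
      have e2 : 1 - (g x) ^ 2 = (c * s / (2 * (m + x))) ^ 2 := by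
        rw [hg]
        field_simp
        linear_combination (-(s^2))*hc2 - (m*(m+4))*hs2
      have hsq2 : Real.sqrt (1 - (g x) ^ 2) = c * s / (2 * (m + x)) := by
        rw [e2, Real.sqrt_sq (by positivity)]
      have hpos2 : 0 < c * s / (2 * (m + x)) := by positivity
      have hgne1 : g x ≠ -1 := by
        intro h
        have h0 : (1:ℝ) - (g x) ^ 2 = 0 := by rw [h]; ring
        rw [e2] at h0
        nlinarith
      have hgne2 : g x ≠ 1 := by
        intro h
        have h0 : (1:ℝ) - (g x) ^ 2 = 0 := by rw [h]; ring
        rw [e2] at h0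
        nlinarith
      have hacd : HasDerivAt (fun p : ℝ => Real.arccos (g p))
          ((-(1 / Real.sqrt (1 - (g x) ^ 2))) *
            (((m + 2) * (2 * (m + x)) - ((m + 2) * x - 2 * m) * 2) / (2 * (m + x)) ^ 2)) x :=
        (Real.hasDerivAt_arccos hgne1 hgne2).comp x hgd
      -- assemble
      have hFd : HasDerivAt F
          (((4 - 2 * x) / (2 * s)
            + (m + 2) * ((1 / Real.sqrt (1 - ((x - 2) / 2) ^ 2)) * (1 / 2))
            + c * ((-(1 / Real.sqrt (1 - (g x) ^ 2))) *
              (((m + 2) * (2 * (m + x)) - ((m + 2) * x - 2 * m) * 2) / (2 * (m + x)) ^ 2)))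
            / (2 * Real.pi)) x :=
        ((hsd.add (hasd.const_mul (m + 2))).add (hacd.const_mul c)).div_const _
      refine hFd.congr_deriv ?_
      rw [hsq1, hsq2]
      have hval : s / (m + x) = (4 - 2 * x) / (2 * s) + (m + 2) * (1 / (s / 2) * (1 / 2))
          + c * (-(1 / (c * s / (2 * (m + x)))) *
            (((m + 2) * (2 * (m + x)) - ((m + 2) * x - 2 * m) * 2) / (2 * (m + x)) ^ 2)) := by
        field_simp
        linear_combination 2 * hs2
      rw [← hval, div_div]
      ring_nf
    · -- interval integrability
      apply ContinuousOn.intervalIntegrable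
      refine ContinuousOn.div ?_ ?_ ?_
      · exact (Real.continuous_sqrt.comp
          (continuous_id.mul (continuous_const.sub continuous_id))).continuousOn
      · exact (continuous_const.mul (continuous_const.add continuous_id)).continuousOn
      · intro x hx
        rw [Set.uIcc_of_le (by norm_num : (0:ℝ) ≤ 4)] at hx
        have h0 : 0 ≤ x := hx.1
        positivity
  rw [key]
  have hF4 : F 4 = ((m + 2) * (Real.pi / 2)) / (2 * Real.pi) := by
    have h4 : ((m + 2) * 4 - 2 * m) / (2 * (m + 4)) = 1 := by
      rw [div_eq_one_iff_eq (by positivity)]; ring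
    simp only [hF]
    norm_num [h4, Real.arcsin_one, Real.arccos_one]
  have hF0 : F 0 = (-((m + 2) * (Real.pi / 2)) + c * Real.pi) / (2 * Real.pi) := by
    have h0 : ((m + 2) * 0 - 2 * m) / (2 * (m + 0)) = -1 := by
      rw [div_eq_iff (by positivity)]; ring
    have h0' : -(2 * m) / (2 * m) = (-1 : ℝ) := by
      rw [div_eq_iff (by positivity)]; ring
    simp only [hF]
    norm_num [h0, h0', Real.arcsin_neg_one, Real.arccos_neg_one]
  rw [hF4, hF0, div_sub_div_same, div_eq_iff (by positivity : (2:ℝ) * Real.pi ≠ 0)]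
  ring
end
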